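/- The composite edge operators M^{(a,h)}₊ := T^a₊ ∘ L^h₊ define a left action of the mirror bicrossproduct M(H) on H*: M^{(1,1)}₊ = id and, for all a, b, h, g ∈ H, M^{(a,h)}₊ ∘ M^{(b,g)}₊ = M^{(a(h₍₁₎ b S(h₍₂₎)), h₍₃₎ g)}₊ (sum over Sweedler components), i.e. the formula (a⊗h) ▷ φ = ⟨S(h₍₁₎)S(a), φ₍₁₎⟩ ⟨h₍₂₎, φ₍₃₎⟩ φ₍₂₎ is a unital action of M(H) with respect to its product (a⊗h)·(b⊗g) = a(h₍₁₎ b S(h₍₂₎)) ⊗ h₍₃₎g. -/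

import Mathlib

/-!
Common setup for formalizing "Ribbon operators in the semidual lattice code model"
(Soglohu–Osei–Osumanu).

`H` is a Hopf algebra over `ℂ`.  Its dual Hopf algebra `H*` is realised as
`Module.Dual ℂ H`, with evaluation pairing `⟨h, φ⟩ = φ h`.  The multiplication of
`H*` is dual to the comultiplication of `H` and the comultiplication of `H*` is
dual to the multiplication of `H`; consequently every edge operator below, given
in the paper by a Sweedler formula on `H*`, is pre-composition
(`LinearMap.dualMap`) with an explicit linear endomorphism of `H`.  For instance
`L^h₊(φ) = ⟨h, S(φ₍₁₎) φ₍₃₎⟩ φ₍₂₎` is exactly `(L^h₊ φ)(x) = Σ φ (S h₍₁₎ * x * h₍₂₎)`.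
Since the antipode is assumed involutive (`S⁻¹ = S`), occurrences of `S⁻¹` are
rendered as `S`.
-/

open TensorProduct

noncomputable section

namespace SemidualKitaev

variable {H : Type} [Ring H] [HopfAlgebra ℂ H]

/-- The antipode of `H`. -/
abbrev S : H →ₗ[ℂ] H := HopfAlgebra.antipode (R := ℂ)

/-- The comultiplication of `H`. -/
abbrev Δ : H →ₗ[ℂ] H ⊗[ℂ] H := Coalgebra.comul (R := ℂ)

/-- The counit of `H`. -/
abbrev ε : H →ₗ[ℂ] ℂ := Coalgebra.counit (R := ℂ)

/-- `sandwich (u ⊗ v) : x ↦ u * x * v`. -/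
def sandwich : H ⊗[ℂ] H →ₗ[ℂ] H →ₗ[ℂ] H :=
  TensorProduct.lift <| LinearMap.mk₂ ℂ
    (fun u v => (LinearMap.mulRight ℂ v) ∘ₗ (LinearMap.mulLeft ℂ u))
    (fun u u' v => LinearMap.ext fun x => by simp [add_mul])
    (fun c u v => LinearMap.ext fun x => by simp [smul_mul_assoc])
    (fun u v v' => LinearMap.ext fun x => by simp [mul_add])
    (fun c u v => LinearMap.ext fun x => by simp [mul_smul_comm])

@[simp] lemma sandwich_tmul (u v x : H) : sandwich (u ⊗ₜ[ℂ] v) x = u * x * v := rfl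

/-! ### Edge (triangle) operators on `H* = Module.Dual ℂ H`

Left-module versions (eq. (3.3) of the paper). -/

/-- `L^h₊(φ) = ⟨h, S(φ₍₁₎) φ₍₃₎⟩ φ₍₂₎`, i.e. `(L^h₊ φ)(x) = Σ φ (S h₍₁₎ * x * h₍₂₎)`. -/
def Lp (h : H) : Module.Dual ℂ H →ₗ[ℂ] Module.Dual ℂ H :=
  (sandwich ((TensorProduct.map S LinearMap.id) (Δ h))).dualMap

/-- `L^h₋(φ) = ⟨h, φ₍₃₎ S⁻¹(φ₍₁₎)⟩ φ₍₂₎`, i.e. `(L^h₋ φ)(x) = Σ φ (S⁻¹ h₍₂₎ * x * h₍₁₎)`,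
with `S⁻¹ = S`. -/
def Lm (h : H) : Module.Dual ℂ H →ₗ[ℂ] Module.Dual ℂ H :=
  (sandwich ((TensorProduct.map S LinearMap.id) ((TensorProduct.comm ℂ H H) (Δ h)))).dualMap

/-- `T^a₊(φ) = ⟨S a, φ₍₁₎⟩ φ₍₂₎`, i.e. `(T^a₊ φ)(x) = φ (S a * x)`. -/
def Tp (a : H) : Module.Dual ℂ H →ₗ[ℂ] Module.Dual ℂ H :=
  (LinearMap.mulLeft ℂ (S a)).dualMap

/-- `T^a₋(φ) = ⟨a, φ₍₂₎⟩ φ₍₁₎`, i.e. `(T^a₋ φ)(x) = φ (x * a)`. -/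
def Tm (a : H) : Module.Dual ℂ H →ₗ[ℂ] Module.Dual ℂ H :=
  (LinearMap.mulRight ℂ a).dualMap

/-! Right-module versions (eq. (3.14) of the paper). -/

/-- `L̃^h₊(φ) = ⟨h, S(φ₍₃₎) φ₍₁₎⟩ φ₍₂₎`, i.e. `(L̃^h₊ φ)(x) = Σ φ (h₍₂₎ * x * S h₍₁₎)`. -/
def Ltp (h : H) : Module.Dual ℂ H →ₗ[ℂ] Module.Dual ℂ H :=
  (sandwich ((TensorProduct.map LinearMap.id S) ((TensorProduct.comm ℂ H H) (Δ h)))).dualMap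

/-- `L̃^h₋(φ) = ⟨h, φ₍₁₎ S⁻¹(φ₍₃₎)⟩ φ₍₂₎`, i.e. `(L̃^h₋ φ)(x) = Σ φ (h₍₁₎ * x * S⁻¹ h₍₂₎)`,
with `S⁻¹ = S`. -/
def Ltm (h : H) : Module.Dual ℂ H →ₗ[ℂ] Module.Dual ℂ H :=
  (sandwich ((TensorProduct.map LinearMap.id S) (Δ h))).dualMap

/-- `T̃^a₊(φ) = ⟨a, φ₍₁₎⟩ φ₍₂₎`, i.e. `(T̃^a₊ φ)(x) = φ (a * x)`. -/
def Ttp (a : H) : Module.Dual ℂ H →ₗ[ℂ] Module.Dual ℂ H :=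
  (LinearMap.mulLeft ℂ a).dualMap

/-- `T̃^a₋(φ) = ⟨S⁻¹ a, φ₍₂₎⟩ φ₍₁₎`, i.e. `(T̃^a₋ φ)(x) = φ (x * S⁻¹ a)`, with `S⁻¹ = S`. -/
def Ttm (a : H) : Module.Dual ℂ H →ₗ[ℂ] Module.Dual ℂ H :=
  (LinearMap.mulRight ℂ (S a)).dualMap

/-- The antipode `S_{H*}` of the dual Hopf algebra: `S_{H*}(φ) = φ ∘ S`. -/
def Sdual : Module.Dual ℂ H →ₗ[ℂ] Module.Dual ℂ H := (S (H := H)).dualMap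

/-- The composite edge operator `M^{(a,h)}₊ = T^a₊ ∘ L^h₊`. -/
def Mp (a h : H) : Module.Dual ℂ H →ₗ[ℂ] Module.Dual ℂ H := Tp a ∘ₗ Lp h

/-- The composite edge operator `M^{(a,h)}₋ = T^a₋ ∘ L^h₋`. -/
def Mm (a h : H) : Module.Dual ℂ H →ₗ[ℂ] Module.Dual ℂ H := Tm a ∘ₗ Lm h

/-- The right action of `M(H)` on `H*` (eq. (2.10) of the paper):
`φ ◁ (a ⊗ h) = ⟨a h₍₁₎, φ₍₁₎⟩ ⟨S h₍₂₎, φ₍₃₎⟩ φ₍₂₎`,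
i.e. `(ract φ a h)(x) = Σ φ (a * h₍₁₎ * x * S h₍₂₎)`. -/
def ract (φ : Module.Dual ℂ H) (a h : H) : Module.Dual ℂ H :=
  (sandwich ((TensorProduct.map (LinearMap.mulLeft ℂ a) S) (Δ h))).dualMap φ

/-- The (convolution) multiplication of the dual Hopf algebra `H*`:
`(φ ∗ ψ)(x) = Σ φ(x₍₁₎) ψ(x₍₂₎)`. -/
def dualMul (φ ψ : Module.Dual ℂ H) : Module.Dual ℂ H :=
  (LinearMap.mul' ℂ ℂ) ∘ₗ (TensorProduct.map φ ψ) ∘ₗ Δ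

/-- The opposite multiplication `∗op` of `H*`. -/
def dualMulOp (φ ψ : Module.Dual ℂ H) : Module.Dual ℂ H := dualMul ψ φ

/-! ### Iterated comultiplications, `Δⁿ h = Σ h₍₁₎ ⊗ (h₍₂₎ ⊗ (⋯ ⊗ h₍ₙ₊₁₎))` -/

def Δ2 : H →ₗ[ℂ] H ⊗[ℂ] (H ⊗[ℂ] H) := (LinearMap.lTensor H Δ) ∘ₗ Δ
def Δ3 : H →ₗ[ℂ] H ⊗[ℂ] (H ⊗[ℂ] (H ⊗[ℂ] H)) := (LinearMap.lTensor H Δ2) ∘ₗ Δ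
def Δ4 : H →ₗ[ℂ] H ⊗[ℂ] (H ⊗[ℂ] (H ⊗[ℂ] (H ⊗[ℂ] H))) := (LinearMap.lTensor H Δ3) ∘ₗ Δ
def Δ5 : H →ₗ[ℂ] H ⊗[ℂ] (H ⊗[ℂ] (H ⊗[ℂ] (H ⊗[ℂ] (H ⊗[ℂ] H)))) :=
  (LinearMap.lTensor H Δ4) ∘ₗ Δ
def Δ6 : H →ₗ[ℂ] H ⊗[ℂ] (H ⊗[ℂ] (H ⊗[ℂ] (H ⊗[ℂ] (H ⊗[ℂ] (H ⊗[ℂ] H))))) :=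
  (LinearMap.lTensor H Δ5) ∘ₗ Δ
def Δ7 : H →ₗ[ℂ] H ⊗[ℂ] (H ⊗[ℂ] (H ⊗[ℂ] (H ⊗[ℂ] (H ⊗[ℂ] (H ⊗[ℂ] (H ⊗[ℂ] H)))))) :=
  (LinearMap.lTensor H Δ6) ∘ₗ Δ
def Δ8 : H →ₗ[ℂ]
    H ⊗[ℂ] (H ⊗[ℂ] (H ⊗[ℂ] (H ⊗[ℂ] (H ⊗[ℂ] (H ⊗[ℂ] (H ⊗[ℂ] (H ⊗[ℂ] H))))))) :=
  (LinearMap.lTensor H Δ7) ∘ₗ Δ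
def Δ9 : H →ₗ[ℂ]
    H ⊗[ℂ] (H ⊗[ℂ] (H ⊗[ℂ] (H ⊗[ℂ] (H ⊗[ℂ] (H ⊗[ℂ] (H ⊗[ℂ] (H ⊗[ℂ] (H ⊗[ℂ] H)))))))) :=
  (LinearMap.lTensor H Δ8) ∘ₗ Δ

lemma mulLeft_add (a a' : H) :
    LinearMap.mulLeft ℂ (a + a') = LinearMap.mulLeft ℂ a + LinearMap.mulLeft ℂ a' :=
  LinearMap.ext fun x => add_mul a a' x

lemma mulLeft_smul (c : ℂ) (a : H) :
    LinearMap.mulLeft ℂ (c • a) = c • LinearMap.mulLeft ℂ a :=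
  LinearMap.ext fun x => smul_mul_assoc c a x

/-! ### The mirror bicrossproduct `M(H) = H^cop ⋈ H` on the vector space `H ⊗ H` -/

/-- `(h₍₁₎ ⊗ h₍₂₎) ⊗ h₍₃₎` version of the 2-fold comultiplication. -/
def Δ2' : H →ₗ[ℂ] (H ⊗[ℂ] H) ⊗[ℂ] H := (LinearMap.rTensor H Δ) ∘ₗ Δ

/-- `mulAction2 ((u ⊗ v) ⊗ w) (b ⊗ g) = (u * b * v) ⊗ (w * g)`. -/
def mulAction2 : (H ⊗[ℂ] H) ⊗[ℂ] H →ₗ[ℂ] (H ⊗[ℂ] H) →ₗ[ℂ] (H ⊗[ℂ] H) :=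
  TensorProduct.lift <| LinearMap.mk₂ ℂ
    (fun (uv : H ⊗[ℂ] H) (w : H) =>
      TensorProduct.map (sandwich uv) (LinearMap.mulLeft ℂ w))
    (fun uv uv' w => by rw [map_add, TensorProduct.map_add_left])
    (fun c uv w => by rw [map_smul, TensorProduct.map_smul_left])
    (fun uv w w' => by rw [mulLeft_add, TensorProduct.map_add_right])
    (fun c uv w => by rw [mulLeft_smul, TensorProduct.map_smul_right])

/-- The product of the mirror bicrossproduct `M(H)`:
`μM (a ⊗ h) (b ⊗ g) = Σ (a * h₍₁₎ * b * S h₍₂₎) ⊗ (h₍₃₎ * g)`. -/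
def μM : (H ⊗[ℂ] H) →ₗ[ℂ] (H ⊗[ℂ] H) →ₗ[ℂ] (H ⊗[ℂ] H) :=
  TensorProduct.lift <| LinearMap.mk₂ ℂ
    (fun (a h : H) =>
      mulAction2 ((TensorProduct.map (TensorProduct.map (LinearMap.mulLeft ℂ a) S)
        LinearMap.id) (Δ2' h)))
    (fun a a' h => by
      rw [mulLeft_add, TensorProduct.map_add_left, TensorProduct.map_add_left,
        LinearMap.add_apply, map_add])
    (fun c a h => by
      rw [mulLeft_smul, TensorProduct.map_smul_left, TensorProduct.map_smul_left,
        LinearMap.smul_apply, map_smul])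
    (fun a h h' => by rw [map_add, map_add, map_add])
    (fun c a h => by rw [map_smul, map_smul, map_smul])

/-- The unit `1 ⊗ 1` of `M(H)`. -/
def oneM : H ⊗[ℂ] H := (1 : H) ⊗ₜ[ℂ] (1 : H)

/-- The counit of `M(H)`: `εM (a ⊗ h) = ε a * ε h`. -/
def εM : H ⊗[ℂ] H →ₗ[ℂ] ℂ :=
  (TensorProduct.lid ℂ ℂ).toLinearMap ∘ₗ TensorProduct.map ε ε

/-- Auxiliary map for the coproduct of `M(H)`: for fixed `a₁, a₂`, it sends
`h₁ ⊗ (h₂ ⊗ (h₃ ⊗ h₄))` to `(a₂ ⊗ h₂) ⊗ ((a₁ * h₁ * S h₃) ⊗ h₄)`. -/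
def deltaMAux (a₁ a₂ : H) :
    H ⊗[ℂ] (H ⊗[ℂ] (H ⊗[ℂ] H)) →ₗ[ℂ] (H ⊗[ℂ] H) ⊗[ℂ] (H ⊗[ℂ] H) :=
  (TensorProduct.map (TensorProduct.mk ℂ H H a₂) LinearMap.id) ∘ₗ
  (TensorProduct.map LinearMap.id
    (TensorProduct.map (LinearMap.mul' ℂ H) LinearMap.id)) ∘ₗ
  (TensorProduct.map LinearMap.id (TensorProduct.assoc ℂ H H H).symm.toLinearMap) ∘ₗ
  (TensorProduct.assoc ℂ H H (H ⊗[ℂ] H)).toLinearMap ∘ₗ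
  (TensorProduct.map (TensorProduct.comm ℂ H H).toLinearMap LinearMap.id) ∘ₗ
  (TensorProduct.assoc ℂ H H (H ⊗[ℂ] H)).symm.toLinearMap ∘ₗ
  (TensorProduct.map (LinearMap.mulLeft ℂ a₁)
    (TensorProduct.map LinearMap.id (TensorProduct.map S LinearMap.id)))

lemma deltaMAux_add_left (a₁ a₁' a₂ : H) :
    deltaMAux (a₁ + a₁') a₂ = deltaMAux a₁ a₂ + deltaMAux (H := H) a₁' a₂ := by
  unfold deltaMAux
  rw [mulLeft_add, TensorProduct.map_add_left]
  simp only [LinearMap.comp_add]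

lemma deltaMAux_smul_left (c : ℂ) (a₁ a₂ : H) :
    deltaMAux (c • a₁) a₂ = c • deltaMAux (H := H) a₁ a₂ := by
  unfold deltaMAux
  rw [mulLeft_smul, TensorProduct.map_smul_left]
  simp only [LinearMap.comp_smul]

lemma deltaMAux_add_right (a₁ a₂ a₂' : H) :
    deltaMAux a₁ (a₂ + a₂') = deltaMAux a₁ a₂ + deltaMAux (H := H) a₁ a₂' := by
  unfold deltaMAux
  rw [map_add, TensorProduct.map_add_left]
  simp only [LinearMap.add_comp]

lemma deltaMAux_smul_right (c : ℂ) (a₁ a₂ : H) :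
    deltaMAux a₁ (c • a₂) = c • deltaMAux (H := H) a₁ a₂ := by
  unfold deltaMAux
  rw [map_smul, TensorProduct.map_smul_left]
  simp only [LinearMap.smul_comp]

/-- `deltaG (a₁ ⊗ a₂) = deltaMAux a₁ a₂`, assembled linearly. -/
def deltaG : H ⊗[ℂ] H →ₗ[ℂ]
    (H ⊗[ℂ] (H ⊗[ℂ] (H ⊗[ℂ] H)) →ₗ[ℂ] (H ⊗[ℂ] H) ⊗[ℂ] (H ⊗[ℂ] H)) :=
  TensorProduct.lift <| LinearMap.mk₂ ℂ deltaMAux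
    deltaMAux_add_left deltaMAux_smul_left deltaMAux_add_right deltaMAux_smul_right

/-- The coproduct of `M(H)`:
`ΔM (a ⊗ h) = Σ (a₍₂₎ ⊗ h₍₂₎) ⊗ ((a₍₁₎ * h₍₁₎ * S h₍₃₎) ⊗ h₍₄₎)`. -/
def ΔM : H ⊗[ℂ] H →ₗ[ℂ] (H ⊗[ℂ] H) ⊗[ℂ] (H ⊗[ℂ] H) :=
  TensorProduct.lift <| LinearMap.mk₂ ℂ
    (fun (a h : H) => (deltaG (Δ a)) (Δ3 h))
    (fun a a' h => by rw [map_add, map_add, LinearMap.add_apply])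
    (fun c a h => by rw [map_smul, map_smul, LinearMap.smul_apply])
    (fun a h h' => by rw [map_add, map_add])
    (fun c a h => by rw [map_smul, map_smul])

/-- The componentwise (tensor-square) product on `M(H) ⊗ M(H)`. -/
def tensorMul2 :
    ((H ⊗[ℂ] H) ⊗[ℂ] (H ⊗[ℂ] H)) →ₗ[ℂ] ((H ⊗[ℂ] H) ⊗[ℂ] (H ⊗[ℂ] H)) →ₗ[ℂ]
      ((H ⊗[ℂ] H) ⊗[ℂ] (H ⊗[ℂ] H)) :=
  TensorProduct.lift <| LinearMap.mk₂ ℂ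
    (fun (u v : H ⊗[ℂ] H) => TensorProduct.map (μM u) (μM v))
    (fun u u' v => by rw [map_add, TensorProduct.map_add_left])
    (fun c u v => by rw [map_smul, TensorProduct.map_smul_left])
    (fun u v v' => by rw [map_add, TensorProduct.map_add_right])
    (fun c u v => by rw [map_smul, TensorProduct.map_smul_right])

/-- The antipode candidate of `M(H)`:
`SM (a ⊗ h) = Σ (1 ⊗ S h₍₂₎) · (S (a * h₍₁₎ * S h₍₃₎) ⊗ 1)`,
where `·` is the mirror product `μM`. -/
def SM : H ⊗[ℂ] H →ₗ[ℂ] H ⊗[ℂ] H :=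
  TensorProduct.lift <| LinearMap.mk₂ ℂ
    (fun (a h : H) =>
      (TensorProduct.lift μM)
        ((TensorProduct.map
            ((TensorProduct.mk ℂ H H 1) ∘ₗ S)
            (((TensorProduct.mk ℂ H H).flip 1) ∘ₗ S ∘ₗ (LinearMap.mul' ℂ H) ∘ₗ
              (TensorProduct.map (LinearMap.mulLeft ℂ a) S)))
          ((TensorProduct.assoc ℂ H H H).toLinearMap
            ((TensorProduct.map (TensorProduct.comm ℂ H H).toLinearMap LinearMap.id)
              ((TensorProduct.assoc ℂ H H H).symm.toLinearMap (Δ2 h))))))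
    (fun a a' h => by
      rw [mulLeft_add, TensorProduct.map_add_left, LinearMap.comp_add, LinearMap.comp_add,
        LinearMap.comp_add, TensorProduct.map_add_right, LinearMap.add_apply, map_add])
    (fun c a h => by
      rw [mulLeft_smul, TensorProduct.map_smul_left, LinearMap.comp_smul, LinearMap.comp_smul,
        LinearMap.comp_smul, TensorProduct.map_smul_right, LinearMap.smul_apply, map_smul])
    (fun a h h' => by simp only [map_add])
    (fun c a h => by simp only [map_smul])

/-- `ℓ ∈ H` is a normalized (two-sided) Haar integral:
`x ℓ = ε(x) ℓ = ℓ x` for all `x`, and `ε(ℓ) = 1`. -/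
def IsHaarIntegral (ℓ : H) : Prop :=
  ε ℓ = 1 ∧ ∀ x : H, x * ℓ = ε x • ℓ ∧ ℓ * x = ε x • ℓ

/-- Fourfold tensor product of operators on `H*`, acting on the four edges
`ψ¹ ⊗ (ψ² ⊗ (ψ³ ⊗ ψ⁴))`. -/
def map4 (f₁ f₂ f₃ f₄ : Module.Dual ℂ H →ₗ[ℂ] Module.Dual ℂ H) :
    Module.Dual ℂ H ⊗[ℂ] (Module.Dual ℂ H ⊗[ℂ] (Module.Dual ℂ H ⊗[ℂ] Module.Dual ℂ H))
      →ₗ[ℂ]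
    Module.Dual ℂ H ⊗[ℂ] (Module.Dual ℂ H ⊗[ℂ] (Module.Dual ℂ H ⊗[ℂ] Module.Dual ℂ H)) :=
  TensorProduct.map f₁ (TensorProduct.map f₂ (TensorProduct.map f₃ f₄))

/-!
Write `ad h y = S(h₍₁₎) y h₍₂₎`. Then `M^{(a,h)}₊ φ = φ ∘ ad h ∘ (S a * ·)`, and since `Δ` is
multiplicative and `S` antimultiplicative, `ad (h g) = ad g ∘ ad h`. The term of the right-hand
side indexed by `h₁ ⊗ h₂ ⊗ h₃` thus evaluates `φ` at `ad g (ad h₃ (S(S h₂) S b S h₁ S a x))`, and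
`ad h₃ (S(S h₂) p) = S(S(h₂) h₃₍₁₎) p h₃₍₂₎`. Summing, the identity `S(k₍₁₎) k₍₂₎ ⊗ k₍₃₎ = 1 ⊗ k`
collapses `h₂` against `h₃₍₁₎`, leaving `S b S(h₁) S a x h₂ = S b · ad h (S a x)`, which is where
the left-hand side evaluates `φ`.
-/

section Sweedler

variable {R A : Type*} [CommSemiring R] [Semiring A] [HopfAlgebra R A]

open Coalgebra in
lemma sum_antipode_tmul_one_mul_comul {a : A} {ι : Type*} (𝓡 : Repr R a ι) :
    ∑ i ∈ 𝓡.index, (HopfAlgebra.antipode R (𝓡.left i) ⊗ₜ[R] (1 : A)) * comul (𝓡.right i) =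
      1 ⊗ₜ[R] a := by
  have h := congr(((LinearMap.mul' R A ∘ₗ (HopfAlgebra.antipode R).rTensor A).rTensor A ∘ₗ
    (TensorProduct.assoc R A A A).symm.toLinearMap)
    $(sum_tmul_tmul_eq 𝓡 (fun i => ℛ R (𝓡.left i)) (fun i => ℛ R (𝓡.right i))))
  simp only [map_sum, LinearMap.comp_apply, LinearEquiv.coe_coe, assoc_symm_tmul,
    LinearMap.rTensor_tmul, LinearMap.mul'_apply] at h
  simp only [← (ℛ R (𝓡.right _)).eq, Finset.mul_sum, Algebra.TensorProduct.tmul_mul_tmul,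
    one_mul, ← h, ← sum_tmul, HopfAlgebra.sum_antipode_mul_eq_smul, smul_tmul, ← tmul_sum,
    sum_counit_smul]

end Sweedler

def antipodeSandwich : H ⊗[ℂ] H →ₗ[ℂ] H →ₗ[ℂ] H := sandwich ∘ₗ TensorProduct.map S LinearMap.id

@[simp] lemma antipodeSandwich_tmul (u v y : H) :
    antipodeSandwich (u ⊗ₜ[ℂ] v) y = S u * y * v := rfl

lemma antipodeSandwich_mul (s t : H ⊗[ℂ] H) :
    antipodeSandwich (s * t) = antipodeSandwich t ∘ₗ antipodeSandwich s := by
  induction s using TensorProduct.induction_on with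
  | zero => simp
  | add s₁ s₂ ih₁ ih₂ => simp only [add_mul, map_add, ih₁, ih₂, LinearMap.comp_add]
  | tmul u v =>
    induction t using TensorProduct.induction_on with
    | zero => simp
    | add t₁ t₂ ih₁ ih₂ => simp only [mul_add, map_add, ih₁, ih₂, LinearMap.add_comp]
    | tmul u' v' =>
      ext y
      simp [Algebra.TensorProduct.tmul_mul_tmul, HopfAlgebra.antipode_mul_antidistrib, mul_assoc]

def ad : H →ₗ[ℂ] H →ₗ[ℂ] H := antipodeSandwich ∘ₗ Δ

lemma ad_mul (h g : H) : ad (h * g) = ad g ∘ₗ ad h := by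
  rw [ad, LinearMap.comp_apply, Bialgebra.comul_mul, antipodeSandwich_mul]; rfl

lemma ad_one : ad (1 : H) = LinearMap.id := by
  ext y
  simp [ad, Algebra.TensorProduct.one_def]

lemma Mp_apply (a h : H) (φ : Module.Dual ℂ H) (x : H) : Mp a h φ x = φ (ad h (S a * x)) := rfl

lemma Mp_one_one : Mp (1 : H) (1 : H) = LinearMap.id := by
  ext φ x
  simp [Mp_apply, ad_one]

def antipodeMulComul : H ⊗[ℂ] H →ₗ[ℂ] H ⊗[ℂ] H :=
  LinearMap.mul' ℂ (H ⊗[ℂ] H) ∘ₗ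
    TensorProduct.map ((Algebra.TensorProduct.includeLeft : H →ₐ[ℂ] H ⊗[ℂ] H).toLinearMap ∘ₗ S) Δ

lemma antipodeMulComul_tmul (v w : H) :
    antipodeMulComul (v ⊗ₜ[ℂ] w) = (S v ⊗ₜ[ℂ] 1) * Δ w := rfl

lemma antipodeMulComul_comul (k : H) : antipodeMulComul (Δ k) = 1 ⊗ₜ[ℂ] k := by
  rw [← (Coalgebra.Repr.arbitrary ℂ k).eq, map_sum]
  simp only [antipodeMulComul_tmul]
  exact sum_antipode_tmul_one_mul_comul _

def mirrorSummand (c y : H) : H ⊗[ℂ] (H ⊗[ℂ] H) →ₗ[ℂ] H :=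
  TensorProduct.lift ((antipodeSandwich ∘ₗ antipodeMulComul).flip ∘ₗ
    LinearMap.mulRight ℂ y ∘ₗ LinearMap.mulLeft ℂ c ∘ₗ S)

lemma mirrorSummand_tmul (c y u v w : H) :
    mirrorSummand c y (u ⊗ₜ[ℂ] (v ⊗ₜ[ℂ] w)) = ad w (S (S v) * (c * S u * y)) := by
  change antipodeSandwich ((S v ⊗ₜ[ℂ] 1) * Δ w) (c * S u * y) = _
  rw [antipodeSandwich_mul]
  simp [ad]

lemma mirrorSummand_Δ2 (c y h : H) : mirrorSummand c y (Δ2 h) = c * ad h y := by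
  change mirrorSummand c y (LinearMap.lTensor H Δ (Δ h)) = c * antipodeSandwich (Δ h) y
  rw [← (Coalgebra.Repr.arbitrary ℂ h).eq]
  simp [mirrorSummand, antipodeMulComul_comul, Finset.mul_sum, mul_assoc]

lemma Mp_mirror_apply (a b u v w g : H) (φ : Module.Dual ℂ H) (x : H) :
    Mp (a * (u * b * S v)) (w * g) φ x =
      φ (ad g (mirrorSummand (S b) (S a * x) (u ⊗ₜ (v ⊗ₜ w)))) := by
  simp only [Mp_apply, ad_mul, LinearMap.comp_apply, mirrorSummand_tmul,
    HopfAlgebra.antipode_mul_antidistrib, mul_assoc]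

theorem statement7_general :
    Mp (1 : H) (1 : H) = LinearMap.id ∧
    ∀ (a b h g : H) (ι : Type) (s : Finset ι) (h1 h2 h3 : ι → H),
      (∑ i ∈ s, h1 i ⊗ₜ[ℂ] (h2 i ⊗ₜ[ℂ] h3 i)) = Δ2 h →
      Mp a h ∘ₗ Mp b g = ∑ i ∈ s, Mp (a * (h1 i * b * S (h2 i))) (h3 i * g) := by
  refine ⟨Mp_one_one, fun a b h g ι s h1 h2 h3 hrep => ?_⟩
  ext φ x
  calc (Mp a h ∘ₗ Mp b g) φ x = φ (ad g (S b * ad h (S a * x))) := rfl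
    _ = φ (ad g (mirrorSummand (S b) (S a * x) (Δ2 h))) := by rw [mirrorSummand_Δ2]
    _ = ∑ i ∈ s, φ (ad g (mirrorSummand (S b) (S a * x) (h1 i ⊗ₜ (h2 i ⊗ₜ h3 i)))) := by
      simp only [← hrep, map_sum]
    _ = _ := by simp only [LinearMap.sum_apply, Mp_mirror_apply]

/-- The composite edge operators `M^{(a,h)}₊ = T^a₊ ∘ L^h₊` define a
left action of the mirror bicrossproduct `M(H)` on `H*`: `M^{(1,1)}₊ = id` and, for all
`a, b, h, g ∈ H` and every Sweedler representation `Δ² h = Σ h₁ ⊗ h₂ ⊗ h₃`,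
`M^{(a,h)}₊ ∘ M^{(b,g)}₊ = Σ M^{(a (h₁ b S(h₂)), h₃ g)}₊`. -/
theorem statement7 [FiniteDimensional ℂ H] (hS : ∀ x : H, S (S x) = x) :
    Mp (1 : H) (1 : H) = LinearMap.id ∧
    ∀ (a b h g : H) (ι : Type) (s : Finset ι) (h1 h2 h3 : ι → H),
      (∑ i ∈ s, h1 i ⊗ₜ[ℂ] (h2 i ⊗ₜ[ℂ] h3 i)) = Δ2 h →
      Mp a h ∘ₗ Mp b g = ∑ i ∈ s, Mp (a * (h1 i * b * S (h2 i))) (h3 i * g) :=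
  statement7_general

end SemidualKitaev
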